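/- The complete graph K_n is not a veto interval graph for any n ≥ 3. -/
import Mathlib


/-- A veto interval: a closed interval `[l, r]` with a veto mark `v`, `l < v < r`. -/
structure VetoInterval where
  l : ℝ
  v : ℝ
  r : ℝ
  hlv : l < v
  hvr : v < r

/-- Two veto intervals are adjacent iff they intersect and neither contains
the veto mark of the other. -/
def VIAdj (a b : VetoInterval) : Prop :=
  (a.v < b.l ∧ b.l < a.r ∧ a.r < b.v) ∨ (b.v < a.l ∧ a.l < b.r ∧ b.r < a.v)

/-- `G` is a veto interval graph. -/
def IsVIGraph {V : Type*} (G : SimpleGraph V) : Prop :=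
  ∃ f : V → VetoInterval, ∀ a b : V, G.Adj a b ↔ VIAdj (f a) (f b)

theorem VIAdj.no_triangle {a b c : VetoInterval}
    (hab : VIAdj a b) (hac : VIAdj a c) (hbc : VIAdj b c) : False := by
  rcases hab with ⟨h1, h2, h3⟩ | ⟨h1, h2, h3⟩ <;>
  rcases hac with ⟨g1, g2, g3⟩ | ⟨g1, g2, g3⟩ <;>
  rcases hbc with ⟨k1, k2, k3⟩ | ⟨k1, k2, k3⟩ <;>
  linarith

/-- The complete graph `K_n` is not a veto interval graph for `n ≥ 3`. -/
theorem stmt_2 (n : ℕ) (hn : 3 ≤ n) :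
    ¬ IsVIGraph (⊤ : SimpleGraph (Fin n)) := by
  rintro ⟨f, hf⟩
  have i0 : Fin n := ⟨0, by omega⟩
  have i1 : Fin n := ⟨1, by omega⟩
  have i2 : Fin n := ⟨2, by omega⟩
  have hab := (hf ⟨0, by omega⟩ ⟨1, by omega⟩).mp (by simp [Fin.ext_iff])
  have hac := (hf ⟨0, by omega⟩ ⟨2, by omega⟩).mp (by simp [Fin.ext_iff])
  have hbc := (hf ⟨1, by omega⟩ ⟨2, by omega⟩).mp (by simp [Fin.ext_iff])
  exact VIAdj.no_triangle hab hac hbc
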